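/- The length of the longest t-controlled bad sequence over (ℕ^k, ≤_lex) with control F_γ satisfies ℓ_{r,k}(t) ≥ F_{γ+k−1}^r(t) for all ordinals γ ≥ 0 and naturals k, r ≥ 1 and t ≥ 0; in particular for r = 1, ℓ_k(t) ≥ F_{γ+k−1}(t), where ℓ is defined by ℓ_1(t) = F_γ(t) and ℓ_{k+1}(t) = Σ_{j=1}^{F_γ(t)} ℓ_k(o_k^{j−1}(t)) with o_k(t) = t + ℓ_k(t). -/

import Mathlib

/-- The fast-growing hierarchy at finite levels: F_0(x) = x+1,
F_{n+1}(x) = F_n^{x+1}(x). -/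
def Fh : ℕ → ℕ → ℕ
  | 0, x => x + 1
  | n + 1, x => (Fh n)^[x + 1] x

/-- ℓ_k for control F_γ: ℓ_1(t) = F_γ(t) and
ℓ_{k+1}(t) = Σ_{j=1}^{F_γ(t)} ℓ_k(o_k^{j−1}(t)), where o_k(t) = t + ℓ_k(t).
(The value at k = 0 is irrelevant.) -/
def ell (γ : ℕ) : ℕ → ℕ → ℕ
  | 0, _ => 0
  | 1, t => Fh γ t
  | k + 2, t =>
      (Finset.range (Fh γ t)).sum fun j =>
        ell γ (k + 1) ((fun s => s + ell γ (k + 1) s)^[j] t)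

/-- Strict lexicographic ordering on ℕ^k. -/
def LexLe {k : ℕ} (x y : Fin k → ℕ) : Prop :=
  x = y ∨ ∃ i : Fin k, x i < y i ∧ ∀ j : Fin k, j < i → x j = y j

/-- Infinity norm. -/
def normInf {k : ℕ} (x : Fin k → ℕ) : ℕ := Finset.univ.sup x

/-- ℓ_{r,k}(t): the maximal length of a t-controlled (for control F_γ) r-bad
sequence over (ℕ^k, ≤_lex), i.e. with no ≤_lex-increasing subsequence of
length r+1. -/
noncomputable def LexBadLen (γ r k t : ℕ) : ℕ :=
  sSup {n | ∃ x : Fin n → (Fin k → ℕ),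
    (∀ i : Fin n, normInf (x i) < Fh γ (i + t)) ∧
    ¬ ∃ c : Fin (r + 1) → Fin n, StrictMono c ∧
        ∀ i : Fin r, LexLe (x (c i.castSucc)) (x (c i.succ))}

/-! ### Auxiliary facts about `Fh` -/

theorem lt_Fh (n : ℕ) : ∀ x, x < Fh n x := by
  induction n with
  | zero => intro x; simp [Fh]
  | succ n ih =>
    have key : ∀ (j x : ℕ), x + j ≤ (Fh n)^[j] x := by
      intro j
      induction j with
      | zero => intro x; simp
      | succ j ihj =>
        intro x
        rw [Function.iterate_succ_apply']
        have h1 := ih ((Fh n)^[j] x)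
        have h2 := ihj x
        omega
    intro x
    have h := key (x + 1) x
    have hFh : Fh (n + 1) x = (Fh n)^[x + 1] x := rfl
    omega

theorem Fh_pos (n x : ℕ) : 0 < Fh n x := lt_of_le_of_lt (Nat.zero_le x) (lt_Fh n x)

theorem Fh_iter_le_iter (n : ℕ) {j j' : ℕ} (h : j ≤ j') (z : ℕ) :
    (Fh n)^[j] z ≤ (Fh n)^[j'] z := by
  induction j' with
  | zero =>
    have : j = 0 := by omega
    subst this; exact le_refl _
  | succ j' ih =>
    rcases Nat.eq_or_lt_of_le h with rfl | h'
    · exact le_refl _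
    · have hj : j ≤ j' := by omega
      have h1 := ih hj
      rw [Function.iterate_succ_apply']
      exact le_trans h1 (le_of_lt (lt_Fh n _))

theorem Fh_mono (n : ℕ) : Monotone (Fh n) := by
  induction n with
  | zero => intro x y h; show x + 1 ≤ y + 1; omega
  | succ n ih =>
    intro x y h
    show (Fh n)^[x + 1] x ≤ (Fh n)^[y + 1] y
    exact le_trans ((ih.iterate (x + 1)) h) (Fh_iter_le_iter n (by omega) y)

/-! ### `ell` lower bounds -/

/-- The offset function o_k. -/
def ofun (γ k : ℕ) : ℕ → ℕ := fun s => s + ell γ (k + 1) s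

theorem ell_ge (γ : ℕ) : ∀ k t, Fh (γ + k) t ≤ ell γ (k + 1) t := by
  intro k
  induction k with
  | zero => intro t; exact le_refl _
  | succ k ih =>
    intro t
    have hoF : ∀ s, Fh (γ + k) s ≤ ofun γ k s := fun s =>
      le_trans (ih s) (Nat.le_add_left _ _)
    have hiter : ∀ j, (Fh (γ + k))^[j] t ≤ (ofun γ k)^[j] t := by
      intro j
      induction j with
      | zero => exact le_refl _
      | succ j ihj =>
        rw [Function.iterate_succ_apply', Function.iterate_succ_apply']
        exact le_trans (Fh_mono _ ihj) (hoF _)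
    have hF1 := lt_Fh γ t
    have hmem : Fh γ t - 1 ∈ Finset.range (Fh γ t) := Finset.mem_range.mpr (by omega)
    have hsum : ell γ (k + 1) ((ofun γ k)^[Fh γ t - 1] t) ≤ ell γ (k + 2) t := by
      have e : ell γ (k + 2) t =
          (Finset.range (Fh γ t)).sum (fun j => ell γ (k + 1) ((ofun γ k)^[j] t)) := rfl
      rw [e]
      exact Finset.single_le_sum (f := fun j => ell γ (k + 1) ((ofun γ k)^[j] t))
        (fun i _ => Nat.zero_le _) hmem
    have e : Fh (γ + (k + 1)) t = (Fh (γ + k))^[t + 1] t := rfl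
    rw [e]
    calc (Fh (γ + k))^[t + 1] t
        ≤ (Fh (γ + k))^[(Fh γ t - 1) + 1] t := Fh_iter_le_iter _ (by omega) t
      _ = Fh (γ + k) ((Fh (γ + k))^[Fh γ t - 1] t) := Function.iterate_succ_apply' _ _ _
      _ ≤ Fh (γ + k) ((ofun γ k)^[Fh γ t - 1] t) := Fh_mono _ (hiter _)
      _ ≤ ell γ (k + 1) ((ofun γ k)^[Fh γ t - 1] t) := ih _
      _ ≤ ell γ (k + 2) t := hsum

theorem Fh_iter_le_ofun_iter (γ k : ℕ) : ∀ j t, (Fh (γ + k))^[j] t ≤ (ofun γ k)^[j] t := by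
  intro j t
  induction j with
  | zero => exact le_refl _
  | succ j ihj =>
    rw [Function.iterate_succ_apply', Function.iterate_succ_apply']
    exact le_trans (Fh_mono _ ihj)
      (le_trans (ell_ge γ k _) (Nat.le_add_left _ _))

/-! ### Lex order facts -/

def LexLt {k : ℕ} (x y : Fin k → ℕ) : Prop :=
  ∃ i : Fin k, x i < y i ∧ ∀ j : Fin k, j < i → x j = y j

theorem not_lexLe_of_lexLt {k : ℕ} {x y : Fin k → ℕ} (h : LexLt x y) : ¬ LexLe y x := by
  rintro (rfl | ⟨i', hi', hpre'⟩)
  · obtain ⟨i, hi, -⟩ := h; omega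
  · obtain ⟨i, hi, hpre⟩ := h
    rcases lt_trichotomy i i' with hlt | rfl | hlt
    · have := hpre' i hlt; omega
    · omega
    · have := hpre i' hlt; omega

theorem lexLe_trans {k : ℕ} {x y z : Fin k → ℕ} (h1 : LexLe x y) (h2 : LexLe y z) :
    LexLe x z := by
  rcases h1 with rfl | ⟨i1, hi1, hp1⟩
  · exact h2
  rcases h2 with rfl | ⟨i2, hi2, hp2⟩
  · exact Or.inr ⟨i1, hi1, hp1⟩
  right
  rcases lt_trichotomy i1 i2 with h | rfl | h
  · refine ⟨i1, ?_, ?_⟩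
    · have := hp2 i1 h; omega
    · intro j hj
      have := hp1 j hj
      have := hp2 j (lt_trans hj h)
      omega
  · refine ⟨i1, by omega, ?_⟩
    intro j hj
    have := hp1 j hj
    have := hp2 j hj
    omega
  · refine ⟨i2, ?_, ?_⟩
    · have := hp1 i2 h; omega
    · intro j hj
      have := hp1 j (lt_trans hj h)
      have := hp2 j hj
      omega

theorem lexLt_cons_tail {k : ℕ} {a : ℕ} {v w : Fin k → ℕ} (h : LexLt v w) :
    LexLt (Fin.cons a v) (Fin.cons a w) := by
  obtain ⟨i, hi, hpre⟩ := h
  refine ⟨i.succ, by simpa using hi, ?_⟩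
  intro j hj
  rcases Fin.eq_zero_or_eq_succ j with rfl | ⟨j', rfl⟩
  · simp
  · have : j' < i := by simpa [Fin.succ_lt_succ_iff] using hj
    simpa using hpre j' this

theorem lexLt_cons_head {k : ℕ} {a b : ℕ} {v w : Fin k → ℕ} (h : a < b) :
    LexLt (Fin.cons a v) (Fin.cons b w) :=
  ⟨0, by simpa using h, fun j hj => absurd hj (Fin.not_lt_zero j)⟩

theorem normInf_lt_iff {k : ℕ} {x : Fin k → ℕ} {B : ℕ} (hB : 0 < B) :
    normInf x < B ↔ ∀ i, x i < B := by
  unfold normInf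
  rw [Finset.sup_lt_iff (by simpa using hB)]
  simp

/-! ### Concatenation of blocks -/

theorem blk_succ {α : Type*} (J : ℕ) (f : ℕ → List α) :
    (List.range (J + 1)).flatMap f = (List.range J).flatMap f ++ f J := by
  rw [List.range_succ, List.flatMap_append]
  simp

theorem blk_length {α : Type*} (f : ℕ → List α) (J : ℕ) :
    ((List.range J).flatMap f).length = ∑ j ∈ Finset.range J, (f j).length := by
  induction J with
  | zero => simp
  | succ J ih => rw [blk_succ, List.length_append, ih, Finset.sum_range_succ]

theorem blk_getElem {α : Type*} (f : ℕ → List α) : ∀ (J i : ℕ)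
    (h : i < ((List.range J).flatMap f).length),
    ∃ j, j < J ∧ (∑ a ∈ Finset.range j, (f a).length) ≤ i ∧
      i < (∑ a ∈ Finset.range j, (f a).length) + (f j).length ∧
      ∃ h2 : i - (∑ a ∈ Finset.range j, (f a).length) < (f j).length,
      ((List.range J).flatMap f)[i]'h = (f j)[i - (∑ a ∈ Finset.range j, (f a).length)]'h2 := by
  intro J
  induction J with
  | zero => intro i h; simp at h
  | succ J ih =>
    intro i h
    have hlen : ((List.range J).flatMap f).length = ∑ a ∈ Finset.range J, (f a).length :=
      blk_length f J
    have h' : i < ((List.range J).flatMap f).length + (f J).length := by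
      have h0 := h
      rw [blk_succ, List.length_append] at h0
      exact h0
    have hsplit : ((List.range (J + 1)).flatMap f)[i]'h =
        ((List.range J).flatMap f ++ f J)[i]'(by rw [← blk_succ]; exact h) :=
      List.getElem_of_eq (blk_succ J f) h
    rcases Nat.lt_or_ge i ((List.range J).flatMap f).length with hc | hc
    · obtain ⟨j, hj1, hj2, hj3, hj4, hj5⟩ := ih i hc
      refine ⟨j, by omega, hj2, hj3, hj4, ?_⟩
      rw [hsplit, List.getElem_append_left hc]
      exact hj5
    · refine ⟨J, by omega, by omega, by omega, by omega, ?_⟩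
      rw [hsplit, List.getElem_append_right hc]
      simp only [hlen]

theorem blk_mono {α : Type*} (f : ℕ → List α) {i i' j j' : ℕ} (hii : i ≤ i')
    (h1 : ∑ a ∈ Finset.range j, (f a).length ≤ i)
    (h2 : i < (∑ a ∈ Finset.range j, (f a).length) + (f j).length)
    (h1' : ∑ a ∈ Finset.range j', (f a).length ≤ i')
    (h2' : i' < (∑ a ∈ Finset.range j', (f a).length) + (f j').length) :
    j ≤ j' := by
  by_contra hcon
  push_neg at hcon
  have hsub : ∑ a ∈ Finset.range (j' + 1), (f a).length ≤ ∑ a ∈ Finset.range j, (f a).length :=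
    Finset.sum_le_sum_of_subset (Finset.range_subset_range.mpr hcon)
  rw [Finset.sum_range_succ] at hsub
  omega

/-! ### Controlled, strictly decreasing lists -/

def Ctrl (γ t : ℕ) {k : ℕ} (l : List (Fin k → ℕ)) : Prop :=
  ∀ (i : ℕ) (h : i < l.length), normInf (l[i]'h) < Fh γ (i + t)

def SDec {k : ℕ} (l : List (Fin k → ℕ)) : Prop :=
  ∀ (i j : ℕ) (hi : i < l.length) (hj : j < l.length), i < j → LexLt (l[j]'hj) (l[i]'hi)

/-- The witness: a maximal strictly decreasing controlled sequence over ℕ^k. -/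
def Wit (γ : ℕ) : (k : ℕ) → ℕ → List (Fin k → ℕ)
  | 0, _ => []
  | 1, t => (List.range (Fh γ t)).map (fun i _ => Fh γ t - 1 - i)
  | k + 2, t => (List.range (Fh γ t)).flatMap (fun j =>
      (Wit γ (k + 1) ((ofun γ k)^[j] t)).map
        (fun v => Fin.cons (Fh γ t - 1 - j) v))

theorem wit_len (γ : ℕ) : ∀ k t, (Wit γ (k + 1) t).length = ell γ (k + 1) t := by
  intro k
  induction k with
  | zero => intro t; simp [Wit, ell]
  | succ k ih =>
    intro t
    have ewit : Wit γ (k + 1 + 1) t = (List.range (Fh γ t)).flatMap (fun j =>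
        (Wit γ (k + 1) ((ofun γ k)^[j] t)).map
          (fun v => Fin.cons (Fh γ t - 1 - j) v)) := rfl
    have eell : ell γ (k + 1 + 1) t = (Finset.range (Fh γ t)).sum fun j =>
        ell γ (k + 1) ((ofun γ k)^[j] t) := rfl
    rw [ewit, eell, blk_length]
    apply Finset.sum_congr rfl
    intro j _
    rw [List.length_map, ih]

theorem wit_spec (γ : ℕ) : ∀ k t, Ctrl γ t (Wit γ (k + 1) t) ∧ SDec (Wit γ (k + 1) t) := by
  intro k
  induction k with
  | zero =>
    intro t
    have ewit : Wit γ (0 + 1) t =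
        (List.range (Fh γ t)).map (fun i _ => Fh γ t - 1 - i) := rfl
    rw [ewit]
    have hget : ∀ (i : ℕ) (h : i < ((List.range (Fh γ t)).map
          (fun i (_ : Fin 1) => Fh γ t - 1 - i)).length),
        ((List.range (Fh γ t)).map (fun i (_ : Fin 1) => Fh γ t - 1 - i))[i]'h
          = (fun _ : Fin 1 => Fh γ t - 1 - i) := by
      intro i h
      rw [List.getElem_map, List.getElem_range]
    constructor
    · intro i h
      rw [hget i h, normInf_lt_iff (Fh_pos _ _)]
      intro c
      have h1 : Fh γ t ≤ Fh γ (i + t) := Fh_mono γ (Nat.le_add_left t i)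
      have h2 := Fh_pos γ t
      show Fh γ t - 1 - i < Fh γ (i + t)
      omega
    · intro i j hi hj hij
      rw [hget i hi, hget j hj]
      refine ⟨0, ?_, ?_⟩
      · show Fh γ t - 1 - j < Fh γ t - 1 - i
        have hjF : j < Fh γ t := by simpa using hj
        have hiF : i < Fh γ t := by simpa using hi
        omega
      · intro j' hj'
        exact absurd hj' (Fin.not_lt_zero j')
  | succ k ih =>
    intro t
    have ewit : Wit γ (k + 1 + 1) t = (List.range (Fh γ t)).flatMap (fun j =>
        (Wit γ (k + 1) ((ofun γ k)^[j] t)).map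
          (fun v => Fin.cons (Fh γ t - 1 - j) v)) := rfl
    rw [ewit]
    set f : ℕ → List (Fin (k + 2) → ℕ) := fun j =>
      (Wit γ (k + 1) ((ofun γ k)^[j] t)).map (fun v => Fin.cons (Fh γ t - 1 - j) v) with hfdef
    have hflen : ∀ j, (f j).length = ell γ (k + 1) ((ofun γ k)^[j] t) := by
      intro j
      show ((Wit γ (k + 1) ((ofun γ k)^[j] t)).map _).length = _
      rw [List.length_map]
      exact wit_len γ k _
    have hS : ∀ j, t + ∑ a ∈ Finset.range j, (f a).length = (ofun γ k)^[j] t := by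
      intro j
      induction j with
      | zero => simp
      | succ j ihj =>
        rw [Finset.sum_range_succ, Function.iterate_succ_apply', hflen]
        have e2 : ofun γ k ((ofun γ k)^[j] t) =
            (ofun γ k)^[j] t + ell γ (k + 1) ((ofun γ k)^[j] t) := rfl
        omega
    have hgetf : ∀ (j p : ℕ) (hp : p < (f j).length),
        ∃ hp' : p < (Wit γ (k + 1) ((ofun γ k)^[j] t)).length,
        (f j)[p]'hp = (Fin.cons (Fh γ t - 1 - j)
          ((Wit γ (k + 1) ((ofun γ k)^[j] t))[p]'hp') : Fin (k + 2) → ℕ) := by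
      intro j p hp
      have hp' : p < (Wit γ (k + 1) ((ofun γ k)^[j] t)).length := by
        have hp2 := hp
        simp only [hfdef, List.length_map] at hp2
        exact hp2
      exact ⟨hp', List.getElem_map _⟩
    constructor
    · intro i h
      obtain ⟨j, hj1, hj2, hj3, hj4, hj5⟩ := blk_getElem f (Fh γ t) i h
      rw [hj5]
      obtain ⟨hp', hcons⟩ := hgetf j _ hj4
      rw [hcons, normInf_lt_iff (Fh_pos _ _)]
      intro c
      rcases Fin.eq_zero_or_eq_succ c with rfl | ⟨c', rfl⟩
      · simp only [Fin.cons_zero]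
        have h1 : Fh γ t ≤ Fh γ (i + t) := Fh_mono γ (Nat.le_add_left t i)
        have h2 := Fh_pos γ t
        omega
      · simp only [Fin.cons_succ]
        have hw := (ih ((ofun γ k)^[j] t)).1 _ hp'
        have harg : (i - ∑ a ∈ Finset.range j, (f a).length) + (ofun γ k)^[j] t = i + t := by
          have := hS j; omega
        rw [harg] at hw
        exact lt_of_le_of_lt (Finset.le_sup (Finset.mem_univ c')) hw
    · intro i i' hi hi' hii
      obtain ⟨j, hj1, hj2, hj3, hj4, hj5⟩ := blk_getElem f (Fh γ t) i hi
      obtain ⟨j', hj1', hj2', hj3', hj4', hj5'⟩ := blk_getElem f (Fh γ t) i' hi'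
      have hjj : j ≤ j' := blk_mono f (le_of_lt hii) hj2 hj3 hj2' hj3'
      rw [hj5, hj5']
      rcases Nat.eq_or_lt_of_le hjj with rfl | hlt
      · obtain ⟨hp1, hc1⟩ := hgetf j _ hj4
        obtain ⟨hp2, hc2⟩ := hgetf j _ hj4'
        rw [hc1, hc2]
        apply lexLt_cons_tail
        exact (ih ((ofun γ k)^[j] t)).2 _ _ hp1 hp2 (by omega)
      · obtain ⟨hp1, hc1⟩ := hgetf j _ hj4
        obtain ⟨hp2, hc2⟩ := hgetf j' _ hj4'
        rw [hc1, hc2]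
        apply lexLt_cons_head
        omega

/-! ### Badness of a concatenation of strictly decreasing blocks -/

theorem bad_of_blocks {k : ℕ} (r : ℕ) (f : ℕ → List (Fin k → ℕ)) (hf : ∀ j, SDec (f j)) :
    ¬ ∃ c : Fin (r + 1) → Fin ((List.range r).flatMap f).length, StrictMono c ∧
      ∀ i : Fin r,
        LexLe (((List.range r).flatMap f)[(c i.castSucc).1]'(c i.castSucc).2)
              (((List.range r).flatMap f)[(c i.succ).1]'(c i.succ).2) := by
  rintro ⟨c, hc, hchain⟩
  have hCT : ∀ (b : ℕ) (hb : b < r + 1) (a : ℕ) (hab : a ≤ b),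
      LexLe (((List.range r).flatMap f)[(c ⟨a, by omega⟩).1]'(c ⟨a, by omega⟩).2)
            (((List.range r).flatMap f)[(c ⟨b, hb⟩).1]'(c ⟨b, hb⟩).2) := by
    intro b
    induction b with
    | zero =>
      intro hb a hab
      have ha0 : a = 0 := by omega
      subst ha0
      exact Or.inl rfl
    | succ b ihb =>
      intro hb a hab
      rcases Nat.eq_or_lt_of_le hab with rfl | hlt
      · exact Or.inl rfl
      · have h1 := ihb (by omega) a (by omega)
        have h2 := hchain ⟨b, by omega⟩
        have e1 : (⟨b, by omega⟩ : Fin r).castSucc = (⟨b, by omega⟩ : Fin (r + 1)) := rfl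
        have e2 : (⟨b, by omega⟩ : Fin r).succ = (⟨b + 1, hb⟩ : Fin (r + 1)) := rfl
        rw [e1, e2] at h2
        exact lexLe_trans h1 h2
  have hdec := fun a : Fin (r + 1) => blk_getElem f r (c a).1 (c a).2
  choose bj hb1 hb2 hb3 hb4 using hdec
  have key : ∀ a a' : Fin (r + 1), a < a' → bj a = bj a' → False := by
    intro a a' hlt hj
    have hca : (c a).1 < (c a').1 := hc hlt
    have h4 := (hb4 a).choose_spec
    have h4' := (hb4 a').choose_spec
    simp only [← hj] at h4'
    have hlex : LexLt (((List.range r).flatMap f)[(c a').1]'(c a').2)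
        (((List.range r).flatMap f)[(c a).1]'(c a).2) := by
      rw [h4, h4']
      exact hf (bj a) _ _ _ _ (by have := hb2 a; omega)
    have hle : LexLe (((List.range r).flatMap f)[(c a).1]'(c a).2)
        (((List.range r).flatMap f)[(c a').1]'(c a').2) := by
      have := hCT a'.1 a'.2 a.1 (le_of_lt hlt)
      exact this
    exact not_lexLe_of_lexLt hlex hle
  obtain ⟨a, a', hne, heq⟩ := Fintype.exists_ne_map_eq_of_card_lt
    (fun a : Fin (r + 1) => (⟨bj a, hb1 a⟩ : Fin r))
    (by rw [Fintype.card_fin, Fintype.card_fin]; omega)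
  have heq' : bj a = bj a' := congrArg Fin.val heq
  rcases hne.lt_or_gt with hlt | hlt
  · exact key a a' hlt heq'
  · exact key a' a hlt heq'.symm

/-! ### Good lists and boundedness (König's lemma argument) -/

def BadL (r : ℕ) {k : ℕ} (l : List (Fin k → ℕ)) : Prop :=
  ¬ ∃ c : Fin (r + 1) → Fin l.length, StrictMono c ∧
      ∀ i : Fin r, LexLe (l[(c i.castSucc).1]'(c i.castSucc).2) (l[(c i.succ).1]'(c i.succ).2)

def GoodL (γ r t : ℕ) {k : ℕ} (l : List (Fin k → ℕ)) : Prop :=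
  Ctrl γ t l ∧ BadL r l

theorem goodL_of_prefix {γ r t k : ℕ} {l m : List (Fin k → ℕ)} (hg : GoodL γ r t l)
    (hp : m <+: l) : GoodL γ r t m := by
  constructor
  · intro i hi
    rw [List.IsPrefix.getElem hp hi]
    exact hg.1 i (lt_of_lt_of_le hi hp.length_le)
  · rintro ⟨c, hc, hch⟩
    apply hg.2
    refine ⟨fun a => ⟨(c a).1, lt_of_lt_of_le (c a).2 hp.length_le⟩, ?_, ?_⟩
    · intro a b hab
      exact Fin.mk_lt_mk.mpr (hc hab)
    · intro i
      have h := hch i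
      have e1 := List.IsPrefix.getElem hp (c i.castSucc).2
      have e2 := List.IsPrefix.getElem hp (c i.succ).2
      rw [e1, e2] at h
      exact h

theorem exists_lex_mono : ∀ (k : ℕ) (f : ℕ → (Fin k → ℕ)),
    ∃ g : ℕ → ℕ, StrictMono g ∧ ∀ m n, m ≤ n → LexLe (f (g m)) (f (g n)) := by
  intro k
  induction k with
  | zero =>
    intro f
    exact ⟨id, strictMono_id, fun m n _ => Or.inl (by funext i; exact i.elim0)⟩
  | succ k ih =>
    intro f
    have hPWO : (Set.univ : Set ℕ).IsPWO := (Set.isWF_univ_iff.mpr (inferInstance : WellFoundedLT ℕ)).isPWO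
    obtain ⟨g₁, hg₁⟩ := hPWO.exists_monotone_subseq (f := fun n => f n 0) (fun _ => Set.mem_univ _)
    obtain ⟨g₂, hg₂, hlex⟩ := ih (fun n => fun i => f (g₁ n) i.succ)
    refine ⟨fun n => g₁ (g₂ n), g₁.strictMono.comp hg₂, ?_⟩
    intro m n hmn
    have hhead : f (g₁ (g₂ m)) 0 ≤ f (g₁ (g₂ n)) 0 := hg₁ (hg₂.monotone hmn)
    rcases lt_or_eq_of_le hhead with h | h
    · exact Or.inr ⟨0, h, fun j hj => absurd hj (Fin.not_lt_zero j)⟩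
    · rcases hlex m n hmn with he | ⟨i, hi, hpre⟩
      · left
        funext j
        rcases Fin.eq_zero_or_eq_succ j with rfl | ⟨j', rfl⟩
        · exact h
        · exact congrFun he j'
      · right
        refine ⟨i.succ, hi, ?_⟩
        intro j hj
        rcases Fin.eq_zero_or_eq_succ j with rfl | ⟨j', rfl⟩
        · exact h
        · exact hpre j' (by simpa [Fin.succ_lt_succ_iff] using hj)

theorem lexbad_bdd (γ k r t : ℕ) : BddAbove {n | ∃ x : Fin n → (Fin k → ℕ),
    (∀ i : Fin n, normInf (x i) < Fh γ (i + t)) ∧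
    ¬ ∃ c : Fin (r + 1) → Fin n, StrictMono c ∧
        ∀ i : Fin r, LexLe (x (c i.castSucc)) (x (c i.succ))} := by
  by_contra hB
  rw [not_bddAbove_iff] at hB
  classical
  -- arbitrarily long good lists
  have hlist : ∀ N, ∃ l : List (Fin k → ℕ), GoodL γ r t l ∧ N ≤ l.length := by
    intro N
    obtain ⟨n, hnS, hn⟩ := hB N
    obtain ⟨x, hx1, hx2⟩ := hnS
    refine ⟨List.ofFn x, ⟨?_, ?_⟩, by rw [List.length_ofFn]; omega⟩
    · intro i h
      rw [List.getElem_ofFn]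
      have := hx1 ⟨i, by simpa using h⟩
      simpa using this
    · rintro ⟨c, hc, hch⟩
      apply hx2
      have hlen : (List.ofFn x).length = n := List.length_ofFn
      refine ⟨fun a => ⟨(c a).1, by have := (c a).2; omega⟩, ?_, ?_⟩
      · intro a b hab
        exact Fin.mk_lt_mk.mpr (hc hab)
      · intro i
        have h := hch i
        rw [List.getElem_ofFn, List.getElem_ofFn] at h
        exact h
  -- extension step
  have hext : ∀ l : List (Fin k → ℕ),
      (∀ N, ∃ m, GoodL γ r t m ∧ l <+: m ∧ N ≤ m.length) →
      ∃ v, ∀ N, ∃ m, GoodL γ r t m ∧ (l ++ [v]) <+: m ∧ N ≤ m.length := by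
    intro l hl
    have hm : ∀ N : ℕ, ∃ m, GoodL γ r t m ∧ l <+: m ∧ l.length + 1 + N ≤ m.length :=
      fun N => hl (l.length + 1 + N)
    choose m hm1 hm2 hm3 using hm
    have hlen : ∀ N, l.length < (m N).length := fun N => by have := hm3 N; omega
    have hVfin : {w : Fin k → ℕ | ∀ c, w c < Fh γ (l.length + t)}.Finite := by
      have he : {w : Fin k → ℕ | ∀ c, w c < Fh γ (l.length + t)} =
          Set.pi Set.univ (fun _ : Fin k => Set.Iio (Fh γ (l.length + t))) := by
        ext w; simp [Set.mem_pi]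
      rw [he]
      exact Set.Finite.pi fun _ => Set.finite_Iio _
    have hvmem : ∀ N, (m N)[l.length]'(hlen N) ∈
        {w : Fin k → ℕ | ∀ c, w c < Fh γ (l.length + t)} := by
      intro N c
      have h0 := (hm1 N).1 l.length (hlen N)
      exact lt_of_le_of_lt (Finset.le_sup (Finset.mem_univ c)) h0
    haveI := hVfin.to_subtype
    obtain ⟨⟨v, hv⟩, hinf⟩ := Finite.exists_infinite_fiber
      (fun N : ℕ => (⟨(m N)[l.length]'(hlen N), hvmem N⟩ :
        {w : Fin k → ℕ | ∀ c, w c < Fh γ (l.length + t)}))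
    refine ⟨v, fun N => ?_⟩
    have hSinf : {N' : ℕ | (m N')[l.length]'(hlen N') = v}.Infinite := by
      have h1 := Set.infinite_coe_iff.mp hinf
      refine h1.mono ?_
      intro N' hN'
      simp only [Set.mem_preimage, Set.mem_singleton_iff] at hN'
      exact congrArg Subtype.val hN'
    obtain ⟨N', hN'v, hNN'⟩ := hSinf.exists_gt N
    refine ⟨m N', hm1 N', ?_, by have := hm3 N'; omega⟩
    obtain ⟨rest, hrest⟩ := hm2 N'
    cases rest with
    | nil =>
      exfalso
      have h2 := hlen N'
      rw [← hrest] at h2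
      simp at h2
    | cons a tl =>
      have e : (m N')[l.length]'(hlen N') = a := by
        have : (l ++ a :: tl)[l.length]'(by simp) = a := by
          rw [List.getElem_append_right (le_refl l.length)]
          simp
        rw [← this]
        congr 1
        exact hrest.symm
      have hav : a = v := by
        have := hN'v
        simp only [Set.mem_setOf_eq] at this
        rw [e] at this
        exact this
      subst hav
      exact ⟨tl, by rw [← hrest]; simp⟩
  have hnil : ∀ N, ∃ m, GoodL γ r t m ∧ ([] : List (Fin k → ℕ)) <+: m ∧ N ≤ m.length := by
    intro N
    obtain ⟨l, h1, h2⟩ := hlist N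
    exact ⟨l, h1, List.nil_prefix, h2⟩
  -- build the infinite branch
  let T := {l : List (Fin k → ℕ) // ∀ N, ∃ m, GoodL γ r t m ∧ l <+: m ∧ N ≤ m.length}
  let step : T → T := fun p =>
    ⟨p.1 ++ [Classical.choose (hext p.1 p.2)], Classical.choose_spec (hext p.1 p.2)⟩
  let Lb : ℕ → T := fun n => step^[n] ⟨[], hnil⟩
  have hstep : ∀ n, Lb (n + 1) = step (Lb n) := fun n => Function.iterate_succ_apply' step n _
  have hLlen : ∀ n, (Lb n).1.length = n := by
    intro n
    induction n with
    | zero => rfl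
    | succ n ih =>
      rw [hstep]
      show ((Lb n).1 ++ [_]).length = n + 1
      rw [List.length_append, ih]
      rfl
  have hLpre : ∀ m n, m ≤ n → (Lb m).1 <+: (Lb n).1 := by
    intro a b h
    induction b, h using Nat.le_induction with
    | base => exact List.prefix_refl _
    | succ n hmn ih =>
      refine ih.trans ?_
      rw [hstep]
      exact List.prefix_append _ _
  have hLgood : ∀ n, GoodL γ r t (Lb n).1 := by
    intro n
    obtain ⟨mm, hm1, hm2, -⟩ := (Lb n).2 0
    exact goodL_of_prefix hm1 hm2
  have hfb : ∀ n, n < (Lb (n + 1)).1.length := by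
    intro n; rw [hLlen]; omega
  set fseq : ℕ → (Fin k → ℕ) := fun n => (Lb (n + 1)).1[n]'(hfb n) with hfseq
  have hfs : ∀ (n M : ℕ) (h : n < M) (hh : n < (Lb M).1.length),
      (Lb M).1[n]'hh = fseq n := by
    intro n M h hh
    exact (List.IsPrefix.getElem (hLpre (n + 1) M h) (hfb n)).symm
  obtain ⟨g, hg, hlex⟩ := exists_lex_mono k fseq
  have hgood := hLgood (g r + 1)
  apply hgood.2
  have hlenM : (Lb (g r + 1)).1.length = g r + 1 := hLlen _
  have hcb : ∀ a : Fin (r + 1), g a.1 < (Lb (g r + 1)).1.length := by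
    intro a
    rw [hlenM]
    have h1 : a.1 ≤ r := Nat.lt_succ_iff.mp a.2
    have := hg.monotone h1
    omega
  refine ⟨fun a => ⟨g a.1, hcb a⟩, ?_, ?_⟩
  · intro a b hab
    simp only [Fin.mk_lt_mk]
    exact hg hab
  · intro i
    show LexLe ((Lb (g r + 1)).1[g i.castSucc.1]'(hcb i.castSucc))
               ((Lb (g r + 1)).1[g i.succ.1]'(hcb i.succ))
    rw [hfs _ _ (by rw [← hlenM]; exact hcb i.castSucc) (hcb i.castSucc),
        hfs _ _ (by rw [← hlenM]; exact hcb i.succ) (hcb i.succ)]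
    apply hlex
    simp only [Fin.coe_castSucc, Fin.val_succ]
    omega

/-! ### Main theorem -/

/-- For control F_γ, the longest t-controlled r-bad sequence over (ℕ^k, ≤_lex)
has length ℓ_{r,k}(t) ≥ F_{γ+k−1}^r(t) for all k, r ≥ 1 and t ≥ 0; in
particular for r = 1, ℓ_k(t) ≥ F_{γ+k−1}(t). -/
theorem lex_lower_bound (γ : ℕ) :
    (∀ k r t : ℕ, 1 ≤ k → 1 ≤ r → (Fh (γ + k - 1))^[r] t ≤ LexBadLen γ r k t) ∧
    (∀ k t : ℕ, 1 ≤ k → Fh (γ + k - 1) t ≤ ell γ k t) := by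
  constructor
  · intro k r t hk hr
    obtain ⟨k, rfl⟩ : ∃ k', k = k' + 1 := ⟨k - 1, by omega⟩
    obtain ⟨r, rfl⟩ : ∃ r', r = r' + 1 := ⟨r - 1, by omega⟩
    have hee : γ + (k + 1) - 1 = γ + k := by omega
    rw [hee]
    set f : ℕ → List (Fin (k + 1) → ℕ) := fun j => Wit γ (k + 1) ((ofun γ k)^[j] t) with hfdef
    have hflen : ∀ j, (f j).length = ell γ (k + 1) ((ofun γ k)^[j] t) := fun j => wit_len γ k _
    have hS : ∀ J, t + ∑ a ∈ Finset.range J, (f a).length = (ofun γ k)^[J] t := by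
      intro J
      induction J with
      | zero => simp
      | succ J ihj =>
        rw [Finset.sum_range_succ, Function.iterate_succ_apply', hflen]
        have e2 : ofun γ k ((ofun γ k)^[J] t) =
            (ofun γ k)^[J] t + ell γ (k + 1) ((ofun γ k)^[J] t) := rfl
        omega
    have hctrl : Ctrl γ t ((List.range (r + 1)).flatMap f) := by
      intro i h
      obtain ⟨j, hj1, hj2, hj3, hj4, hj5⟩ := blk_getElem f (r + 1) i h
      rw [hj5]
      have hw := (wit_spec γ k ((ofun γ k)^[j] t)).1 _ hj4
      have harg : (i - ∑ a ∈ Finset.range j, (f a).length) + (ofun γ k)^[j] t = i + t := by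
        have := hS j; omega
      rw [harg] at hw
      exact hw
    have hbad := bad_of_blocks (r + 1) f (fun j => (wit_spec γ k ((ofun γ k)^[j] t)).2)
    have hlenL : ((List.range (r + 1)).flatMap f).length =
        ∑ a ∈ Finset.range (r + 1), (f a).length := blk_length f (r + 1)
    have hlast : (Fh (γ + k))^[r + 1] t ≤ ((List.range (r + 1)).flatMap f).length := by
      calc (Fh (γ + k))^[r + 1] t
          = Fh (γ + k) ((Fh (γ + k))^[r] t) := Function.iterate_succ_apply' _ _ _
        _ ≤ Fh (γ + k) ((ofun γ k)^[r] t) := Fh_mono _ (Fh_iter_le_ofun_iter γ k r t)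
        _ ≤ ell γ (k + 1) ((ofun γ k)^[r] t) := ell_ge γ k _
        _ ≤ ∑ a ∈ Finset.range (r + 1), (f a).length := by
            rw [← hflen r]
            exact Finset.single_le_sum (f := fun a => (f a).length)
              (fun _ _ => Nat.zero_le _) (Finset.self_mem_range_succ r)
        _ = ((List.range (r + 1)).flatMap f).length := hlenL.symm
    have hmem : ((List.range (r + 1)).flatMap f).length ∈
        {n | ∃ x : Fin n → (Fin (k + 1) → ℕ),
          (∀ i : Fin n, normInf (x i) < Fh γ (i + t)) ∧
          ¬ ∃ c : Fin (r + 1 + 1) → Fin n, StrictMono c ∧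
              ∀ i : Fin (r + 1), LexLe (x (c i.castSucc)) (x (c i.succ))} := by
      refine ⟨fun i => ((List.range (r + 1)).flatMap f)[i.1]'i.2, ?_, ?_⟩
      · intro i
        exact hctrl i.1 i.2
      · exact hbad
    exact le_trans hlast (le_csSup (lexbad_bdd γ (k + 1) (r + 1) t) hmem)
  · intro k t hk
    obtain ⟨k, rfl⟩ : ∃ k', k = k' + 1 := ⟨k - 1, by omega⟩
    have hee : γ + (k + 1) - 1 = γ + k := by omega
    rw [hee]
    exact ell_ge γ k t
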